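/- arXiv:2106.12228 — 4 statements merged into one kernel-verified Lean document; each statement's English description precedes it below -/
import Mathlib

section
/- Let M ∈ ℕ, let 𝒢 = (G_1, …, G_G) be a partition of Fin M into G nonempty pairwise disjoint groups whose union is Fin M, and let v : Finset (Fin M) → ℝ be separable over 𝒢 with component functions w_1, …, w_G. Then for every i and every feature j ∈ G_i, the Shapley value φ_j(v) = ∑_{S ⊆ univ \ {j}} |S|!·(M−|S|−1)!/M! · (v(S ∪ {j}) − v(S)) simplifies to a sum over subsets of G_i only: φ_j(v) = ∑_{S ⊆ G_i \ {j}} |S|!·(|G_i|−|S|−1)!/|G_i|! · (w_i(S ∪ {j}) − w_i(S)). (Theorem 2.1, simplified feature-wise Shapley formula.) -/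
/-!
The marginal contribution of `j` to a game that is separable over the groups depends on a
coalition `S` only through `S ∩ G i`, so in the Shapley sum the players outside `G i` act as
null players. They can be removed one at a time: a coalition of the smaller game reappears
in the larger one with and without the removed player, and the two weights add up to the old
one, `t! (n-t-1)! / n! = t! (n-t)! / (n+1)! + (t+1)! (n-t-1)! / (n+1)!`.
-/

open Finset

/-- The feature-wise Shapley value of feature `j` for contribution function `v`. -/
noncomputable def shapley {M : ℕ} (v : Finset (Fin M) → ℝ) (j : Fin M) : ℝ :=
  ∑ S ∈ (Finset.univ.erase j).powerset,
    ((S.card.factorial * (M - S.card - 1).factorial : ℕ) : ℝ) / (M.factorial : ℕ) *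
      (v (insert j S) - v S)

open scoped Nat

noncomputable def shapleyWeight (n t : ℕ) : ℝ :=
  ((t ! * (n - t - 1)! : ℕ) : ℝ) / (n ! : ℕ)

theorem shapleyWeight_eq_add_succ {n t : ℕ} (h : t < n) :
    shapleyWeight n t = shapleyWeight (n + 1) t + shapleyWeight (n + 1) (t + 1) := by
  obtain ⟨k, rfl⟩ : ∃ k, n = t + k + 1 := ⟨n - t - 1, by omega⟩
  unfold shapleyWeight
  rw [show t + k + 1 - t - 1 = k by omega, show t + k + 1 + 1 - t - 1 = k + 1 by omega,
    show t + k + 1 + 1 - (t + 1) - 1 = k by omega]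
  simp only [Nat.factorial_succ, Nat.cast_mul, Nat.cast_add, Nat.cast_one]
  field_simp
  ring

theorem sum_powerset_union_shapleyWeight {α : Type*} [DecidableEq α] {A B : Finset α}
    (hAB : Disjoint A B) {n : ℕ} (hn : #A < n) (u : Finset α → ℝ) :
    ∑ S ∈ (A ∪ B).powerset, shapleyWeight (n + #B) #S * u (S ∩ A) =
      ∑ T ∈ A.powerset, shapleyWeight n #T * u T := by
  induction B using Finset.induction_on with
  | empty =>
    simp only [union_empty, card_empty, add_zero]
    exact sum_congr rfl fun S hS => by rw [inter_eq_left.2 (mem_powerset.1 hS)]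
  | insert b B hb ih =>
    have hbA : b ∉ A := disjoint_right.1 hAB (mem_insert_self b B)
    rw [← ih (hAB.mono_right (subset_insert b B)), union_insert,
      sum_powerset_insert (fun h => (mem_union.1 h).elim hbA hb), ← sum_add_distrib]
    refine sum_congr rfl fun S hS => ?_
    have hbS : b ∉ S := fun h => (mem_union.1 (mem_powerset.1 hS h)).elim hbA hb
    have hS : #S < n + #B := (card_le_card (mem_powerset.1 hS)).trans_lt
      ((card_union_le A B).trans_lt (by omega))
    rw [card_insert_of_notMem hbS, insert_inter_of_notMem hbA, card_insert_of_notMem hb,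
      ← add_assoc, shapleyWeight_eq_add_succ hS, add_mul]

theorem shapley_eq_of_sub_insert_eq_inter {M : ℕ} {v u : Finset (Fin M) → ℝ}
    {C : Finset (Fin M)} {j : Fin M} (hj : j ∈ C)
    (hvu : ∀ S, v (insert j S) - v S = u (insert j (S ∩ C)) - u (S ∩ C)) :
    shapley v j = ∑ T ∈ (C.erase j).powerset, shapleyWeight #C #T * (u (insert j T) - u T) := by
  have hdisj : Disjoint (C.erase j) (univ \ C) := disjoint_sdiff.mono_left (erase_subset j C)
  have hunion : C.erase j ∪ (univ \ C) = univ.erase j := by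
    ext x; by_cases hx : x = j <;> simp [hx, hj, em]
  have hcard : #C + #(univ \ C) = M := by
    rw [add_comm, card_sdiff_add_card_eq_card (subset_univ C), card_fin]
  calc shapley v j
      = ∑ S ∈ (univ.erase j).powerset, shapleyWeight M #S * (v (insert j S) - v S) := rfl
    _ = ∑ S ∈ (C.erase j ∪ (univ \ C)).powerset, shapleyWeight (#C + #(univ \ C)) #S *
          (u (insert j (S ∩ C.erase j)) - u (S ∩ C.erase j)) := by
      rw [hunion, hcard]
      refine sum_congr rfl fun S hS => ?_
      have hjS : j ∉ S := fun h => by simpa using mem_powerset.1 hS h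
      rw [hvu, inter_erase, erase_eq_of_notMem fun h => hjS (mem_inter.1 h).1]
    _ = _ := sum_powerset_union_shapleyWeight hdisj (card_erase_lt_of_mem hj)
      fun T => u (insert j T) - u T

theorem sub_insert_eq_of_eq_sum_inter {ι α : Type*} [Fintype ι] [DecidableEq ι] [DecidableEq α]
    {G : ι → Finset α} {v : Finset α → ℝ} {w : ι → Finset α → ℝ}
    (hsep : ∀ S, v S = ∑ k, w k (S ∩ G k)) {i : ι} {j : α} (hj : j ∈ G i)
    (hji : ∀ k, k ≠ i → j ∉ G k) (S : Finset α) :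
    v (insert j S) - v S = w i (insert j (S ∩ G i)) - w i (S ∩ G i) := by
  rw [hsep, hsep, ← sum_sub_distrib, Fintype.sum_eq_single i fun k hk => ?_,
    insert_inter_of_mem hj]
  rw [insert_inter_of_notMem (hji k hk), sub_self]

theorem simplified_featurewise_shapley_general
    (M Gn : ℕ) (G : Fin Gn → Finset (Fin M))
    (hdisj : ∀ i j : Fin Gn, i ≠ j → Disjoint (G i) (G j))
    (v : Finset (Fin M) → ℝ) (w : Fin Gn → Finset (Fin M) → ℝ)
    (hsep : ∀ S : Finset (Fin M), v S = ∑ i, w i (S ∩ G i))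
    (i : Fin Gn) (j : Fin M) (hj : j ∈ G i) :
    shapley v j =
      ∑ S ∈ ((G i).erase j).powerset,
        ((S.card.factorial * ((G i).card - S.card - 1).factorial : ℕ) : ℝ) /
          ((G i).card.factorial : ℕ) * (w i (insert j S) - w i S) := by
  refine shapley_eq_of_sub_insert_eq_inter hj (sub_insert_eq_of_eq_sum_inter hsep hj fun k hk => ?_)
  exact disjoint_left.1 (hdisj i k (Ne.symm hk)) hj

/-- Theorem 2.1 (simplified feature-wise Shapley formula): if `v` is separable over the
partition `G` with component functions `w`, then the Shapley value of a feature `j ∈ G i`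
is given by the Shapley formula restricted to the group `G i`, with contribution `w i`. -/
theorem simplified_featurewise_shapley
    (M Gn : ℕ) (G : Fin Gn → Finset (Fin M))
    (hne : ∀ i, (G i).Nonempty)
    (hdisj : ∀ i j : Fin Gn, i ≠ j → Disjoint (G i) (G j))
    (hcover : Finset.univ.biUnion G = (Finset.univ : Finset (Fin M)))
    (v : Finset (Fin M) → ℝ) (w : Fin Gn → Finset (Fin M) → ℝ)
    (hsep : ∀ S : Finset (Fin M), v S = ∑ i, w i (S ∩ G i))
    (i : Fin Gn) (j : Fin M) (hj : j ∈ G i) :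
    shapley v j =
      ∑ S ∈ ((G i).erase j).powerset,
        ((S.card.factorial * ((G i).card - S.card - 1).factorial : ℕ) : ℝ) /
          ((G i).card.factorial : ℕ) * (w i (insert j S) - w i S) :=
  simplified_featurewise_shapley_general M Gn G hdisj v w hsep i j hj
end

section
/- Let M, g, s ∈ ℕ with 1 ≤ g ≤ M and s ≤ g − 1. Then (1/M) · ∑_{k=0}^{M−g} C(M−g, k) / C(M−1, s+k) = s! · (g − s − 1)! / g!, where C(n, k) denotes the binomial coefficient. -/
/-!
Pascal's rule splits `S n = ∑ k ≤ n, C(n, k) / C(n + r, s + k)` at `n + 1` into two sums over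
`C(n, k)`, and the reciprocal Pascal rule
`1 / C(m + 1, j) + 1 / C(m + 1, j + 1) = (m + 2) / ((m + 1) C(m, j))` recombines them, so
`S (n + 1) = (n + r + 2) / (n + r + 1) * S n`. This telescopes to
`S n = (n + r + 1) / ((r + 1) C(r, s))`, and with `n = M - g`, `r = g - 1` the factor
`n + r + 1 = M` cancels against `1 / M`.
-/

open Finset

variable {K : Type*} [Field K] [CharZero K]

theorem inv_choose_add_inv_choose_succ {m j : ℕ} (hj : j ≤ m) :
    ((m + 1).choose j : K)⁻¹ + ((m + 1).choose (j + 1) : K)⁻¹ =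
      (m + 2) / (m + 1) * (m.choose j : K)⁻¹ := by
  have hmj : ((m + 1 - j : ℕ) : K) ≠ 0 := Nat.cast_ne_zero.2 (by omega)
  have ha : ((m + 1).choose j : K) = m.choose j * (m + 1) / (m + 1 - j : ℕ) :=
    eq_div_of_mul_eq hmj (by exact_mod_cast (Nat.choose_mul_succ_eq m j).symm)
  have hb : ((m + 1).choose (j + 1) : K) = m.choose j * (m + 1) / (j + 1) :=
    eq_div_of_mul_eq (Nat.cast_add_one_ne_zero j)
      (by exact_mod_cast (Nat.add_one_mul_choose_eq m j).symm.trans (mul_comm _ _))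
  rw [ha, hb, inv_div, inv_div]
  field_simp
  push_cast [Nat.cast_sub (show j ≤ m + 1 by omega)]
  ring

theorem sum_choose_mul_inv_choose_add {r s : ℕ} (hs : s ≤ r) (n : ℕ) :
    ∑ k ∈ range (n + 1), (n.choose k : K) * ((n + r).choose (s + k) : K)⁻¹ =
      (n + r + 1) / ((r + 1) * r.choose s) := by
  induction n with
  | zero => simp [div_mul_eq_div_div, div_self (Nat.cast_add_one_ne_zero (R := K) r)]
  | succ n ih =>
    rw [sum_choose_succ_mul (fun i _ ↦ (((n + 1 + r).choose (s + i) : ℕ) : K)⁻¹) n,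
      ← sum_add_distrib]
    calc ∑ k ∈ range (n + 1), ((n.choose k : K) * ((n + 1 + r).choose (s + k) : K)⁻¹ +
          (n.choose k : K) * ((n + 1 + r).choose (s + (k + 1)) : K)⁻¹)
        = ∑ k ∈ range (n + 1),
            (n + r + 2) / (n + r + 1) * ((n.choose k : K) * ((n + r).choose (s + k) : K)⁻¹) := by
          refine sum_congr rfl fun k hk ↦ ?_
          rw [← mul_add, show n + 1 + r = n + r + 1 by ring, ← add_assoc s,
            inv_choose_add_inv_choose_succ (by have := mem_range.1 hk; omega)]
          push_cast
          ring
      _ = (n + 1 + r + 1) / ((r + 1) * r.choose s) := by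
          have hnr : (n + r + 1 : K) ≠ 0 := by exact_mod_cast (n + r).succ_ne_zero
          rw [← mul_sum, ih]
          field_simp
          ring
      _ = _ := by push_cast; ring

/-- Identity of sums of ratios of binomial coefficients: for `1 ≤ g ≤ M` and `s ≤ g - 1`,
`(1/M) ∑_{k=0}^{M-g} C(M-g,k)/C(M-1,s+k) = s!(g-s-1)!/g!`. -/
theorem binomial_ratio_sum_identity
    (M g s : ℕ) (hg1 : 1 ≤ g) (hgM : g ≤ M) (hs : s ≤ g - 1) :
    (1 / (M : ℝ)) * ∑ k ∈ Finset.range (M - g + 1),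
        (((M - g).choose k : ℕ) : ℝ) / (((M - 1).choose (s + k) : ℕ) : ℝ) =
      ((s.factorial * (g - s - 1).factorial : ℕ) : ℝ) / (g.factorial : ℕ) := by
  obtain ⟨r, rfl⟩ : ∃ r, g = r + 1 := ⟨g - 1, by omega⟩
  obtain ⟨n, rfl⟩ := Nat.exists_eq_add_of_le hgM
  replace hs : s ≤ r := hs
  rw [show r + 1 + n - (r + 1) = n by omega, show r + 1 + n - 1 = n + r by omega,
    show r + 1 - s - 1 = r - s by omega]
  simp_rw [div_eq_mul_inv (_ : ℝ) ((n + r).choose _ : ℝ)]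
  rw [sum_choose_mul_inv_choose_add hs, Nat.factorial_succ,
    ← Nat.choose_mul_factorial_mul_factorial hs]
  push_cast
  field_simp
  ring
end

section
/- Let M ∈ ℕ, let 𝒢 = (G_1, …, G_G) be a partition of Fin M into G nonempty pairwise disjoint groups whose union is Fin M, and let v : Finset (Fin M) → ℝ be separable over 𝒢 with component functions w_1, …, w_G. If some group is a singleton, G_i = {j}, then the feature-wise Shapley value of j is φ_j(v) = w_i({j}) − w_i(∅). (Special case of Theorem 2.1: a feature that is independent of all other features and enters the model purely additively has Shapley value f_j(x*_j) − E[f_j(x_j)].) -/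
/-!
Adding `j` to a coalition `S` changes only the component of the group containing `j`, so for a
singleton group the marginal contribution `v (S ∪ {j}) - v S` is `w i {j} - w i ∅` for every `S`.
The Shapley value is a weighted average of these marginal contributions, the weights summing to 1.
-/

open Finset

open Function

/- Grouping coalitions by size `m`, each of the `M` sizes contributes
`C(M-1, m) · m! (M-1-m)! / M! = 1/M`. -/
lemma shapley_weights_sum_eq_one {M : ℕ} (j : Fin M) :
    ∑ S ∈ (univ.erase j).powerset,
      ((S.card.factorial * (M - S.card - 1).factorial : ℕ) : ℝ) / (M.factorial : ℕ) = 1 := by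
  obtain ⟨n, rfl⟩ : ∃ n, M = n + 1 := ⟨M - 1, (Nat.succ_pred_eq_of_pos j.pos).symm⟩
  have hcard : (univ.erase j).card = n := by simp [card_erase_of_mem]
  rw [sum_powerset_apply_card (fun m ↦
    ((m.factorial * (n + 1 - m - 1).factorial : ℕ) : ℝ) / ((n + 1).factorial : ℕ)), hcard]
  have hterm : ∀ m ∈ range (n + 1), n.choose m •
      (((m.factorial * (n + 1 - m - 1).factorial : ℕ) : ℝ) / ((n + 1).factorial : ℕ))
        = ((n + 1 : ℕ) : ℝ)⁻¹ := by
    intro m hm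
    have hmn : m ≤ n := Nat.lt_succ_iff.mp (mem_range.mp hm)
    have hchoose : n.choose m * (m.factorial * (n - m).factorial) = n.factorial := by
      rw [← Nat.choose_mul_factorial_mul_factorial hmn, mul_assoc]
    rw [show n + 1 - m - 1 = n - m by omega, nsmul_eq_mul, ← mul_div_assoc, ← Nat.cast_mul,
      hchoose, Nat.factorial_succ, Nat.cast_mul, div_mul_cancel_right₀ (by positivity)]
  rw [sum_congr rfl hterm, sum_const, card_range, nsmul_eq_mul, mul_inv_cancel₀ (by positivity)]

lemma shapley_eq_of_marginal_eq {M : ℕ} {v : Finset (Fin M) → ℝ} {j : Fin M} {c : ℝ}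
    (h : ∀ S, j ∉ S → v (insert j S) - v S = c) : shapley v j = c := by
  have hmarg : ∀ S ∈ (univ.erase j).powerset, v (insert j S) - v S = c :=
    fun S hS ↦ h S fun hj ↦ notMem_erase j univ (mem_powerset.mp hS hj)
  rw [shapley, sum_congr rfl fun S hS ↦ by rw [hmarg S hS], ← sum_mul,
    shapley_weights_sum_eq_one, one_mul]

lemma sum_insert_inter_sub_sum_inter {ι α : Type*} [Fintype ι] [DecidableEq α]
    {G : ι → Finset α} (hdisj : Pairwise (Disjoint on G)) (w : ι → Finset α → ℝ)
    {i : ι} {j : α} (hj : j ∈ G i) (S : Finset α) :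
    ∑ k, w k (insert j S ∩ G k) - ∑ k, w k (S ∩ G k) =
      w i (insert j S ∩ G i) - w i (S ∩ G i) := by
  rw [← sum_sub_distrib, sum_eq_single i]
  · intro k _ hki
    have hjk : j ∉ G k := disjoint_left.mp (hdisj hki.symm) hj
    rw [insert_inter_of_notMem hjk, sub_self]
  · exact fun hi ↦ absurd (mem_univ i) hi

theorem shapley_singleton_group_general
    (M Gn : ℕ) (G : Fin Gn → Finset (Fin M))
    (hdisj : ∀ i j : Fin Gn, i ≠ j → Disjoint (G i) (G j))
    (v : Finset (Fin M) → ℝ) (w : Fin Gn → Finset (Fin M) → ℝ)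
    (hsep : ∀ S : Finset (Fin M), v S = ∑ i, w i (S ∩ G i))
    (i : Fin Gn) (j : Fin M) (hsingle : G i = {j}) :
    shapley v j = w i {j} - w i ∅ := by
  have hj : j ∈ G i := hsingle ▸ mem_singleton_self j
  refine shapley_eq_of_marginal_eq fun S hjS ↦ ?_
  rw [hsep, hsep, sum_insert_inter_sub_sum_inter hdisj w hj, hsingle,
    inter_singleton_of_mem (mem_insert_self j S), inter_singleton_of_notMem hjS]

/-- Special case of Theorem 2.1: if `v` is separable over the partition `G` with component
functions `w` and some group is a singleton `G i = {j}`, then the feature-wise Shapley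
value of `j` is `w i {j} - w i ∅`. -/
theorem shapley_singleton_group
    (M Gn : ℕ) (G : Fin Gn → Finset (Fin M))
    (hne : ∀ i, (G i).Nonempty)
    (hdisj : ∀ i j : Fin Gn, i ≠ j → Disjoint (G i) (G j))
    (hcover : Finset.univ.biUnion G = (Finset.univ : Finset (Fin M)))
    (v : Finset (Fin M) → ℝ) (w : Fin Gn → Finset (Fin M) → ℝ)
    (hsep : ∀ S : Finset (Fin M), v S = ∑ i, w i (S ∩ G i))
    (i : Fin Gn) (j : Fin M) (hsingle : G i = {j}) :
    shapley v j = w i {j} - w i ∅ :=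
  shapley_singleton_group_general M Gn G hdisj v w hsep i j hsingle
end

section
/- Let (Ω, ℱ, μ) be a probability space, M ∈ ℕ, and X_j : Ω → ℝ measurable for j ∈ Fin M. Let 𝒢 = (G_1, …, G_G) be a partition of Fin M and suppose the family of random vectors ((X_j)_{j ∈ G_1}, …, (X_j)_{j ∈ G_G}) is mutually independent (group independence, Condition 2). For each i let f_i be a measurable real-valued function of the coordinates (X_j)_{j ∈ G_i} such that f_i((X_j)_{j ∈ G_i}) is integrable, so that f = ∑_{i=1}^G f_i is partially additively separable over 𝒢 (Condition 1). Then for every subset S ⊆ Fin M, μ-almost everywhere, E[ ∑_{i=1}^G f_i((X_j)_{j ∈ G_i}) | σ((X_j)_{j ∈ S}) ] = ∑_{i=1}^G E[ f_i((X_j)_{j ∈ G_i}) | σ((X_j)_{j ∈ S ∩ G_i}) ]; in particular, for groups i with S ∩ G_i = ∅ the i-th term equals the unconditional expectation E[f_i((X_j)_{j ∈ G_i})]. -/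
/-!
The `i`-th summand is `σ(X_{G i})`-measurable, and `σ(X_S) = σ(X_{S ∩ G i}) ⊔ σ(X_{S \ G i})`,
where the second σ-algebra is generated by the other groups and is therefore independent of
`σ(X_{G i})`. Adjoining to the conditioning σ-algebra one that is independent of the integrand
and of the original conditioning does not change the conditional expectation: on the generating
π-system of intersections `s₁ ∩ s₂` both integrals factor as `μ s₂ • ∫ in s₁`. Linearity of the
conditional expectation gives the sum formula, and for `S ∩ G i = ∅` the σ-algebra is trivial.
-/

open MeasureTheory ProbabilityTheory Finset

lemma IsPiSystem.image2_inter {Ω : Type*} {C D : Set (Set Ω)} (hC : IsPiSystem C)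
    (hD : IsPiSystem D) : IsPiSystem (Set.image2 (· ∩ ·) C D) := by
  rintro _ ⟨c₁, hc₁, d₁, hd₁, rfl⟩ _ ⟨c₂, hc₂, d₂, hd₂, rfl⟩ hne
  rw [Set.inter_inter_inter_comm] at hne ⊢
  exact Set.mem_image2_of_mem (hC _ hc₁ _ hc₂ hne.left) (hD _ hd₁ _ hd₂ hne.right)

namespace MeasurableSpace

lemma sup_eq_generateFrom_image2_inter {Ω : Type*} (m₁ m₂ : MeasurableSpace Ω) :
    m₁ ⊔ m₂ = generateFrom
      (Set.image2 (· ∩ ·) {s | MeasurableSet[m₁] s} {s | MeasurableSet[m₂] s}) := by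
  refine le_antisymm (sup_le (fun s hs => ?_) (fun s hs => ?_)) (generateFrom_le ?_)
  · exact measurableSet_generateFrom ⟨s, hs, Set.univ, .univ, Set.inter_univ s⟩
  · exact measurableSet_generateFrom ⟨Set.univ, .univ, s, hs, Set.univ_inter s⟩
  · rintro _ ⟨s₁, hs₁, s₂, hs₂, rfl⟩
    exact (le_sup_left (a := m₁) _ hs₁).inter (le_sup_right (b := m₂) _ hs₂)

end MeasurableSpace

section SetIntegral

variable {Ω E : Type*} [NormedAddCommGroup E] [NormedSpace ℝ E] {m mΩ : MeasurableSpace Ω}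
  {μ : Measure[mΩ] Ω}

lemma setIntegral_eq_of_isPiSystem (hm : m ≤ mΩ) {C : Set (Set Ω)}
    (hgen : m = MeasurableSpace.generateFrom C) (hC : IsPiSystem C) {f g : Ω → E}
    (hf : Integrable f μ) (hg : Integrable g μ) (h_univ : ∫ x, f x ∂μ = ∫ x, g x ∂μ)
    (h_eq : ∀ s ∈ C, ∫ x in s, f x ∂μ = ∫ x in s, g x ∂μ) {s : Set Ω}
    (hs : MeasurableSet[m] s) : ∫ x in s, f x ∂μ = ∫ x in s, g x ∂μ := by
  induction s, hs using MeasurableSpace.induction_on_inter hgen hC with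
  | empty => simp
  | basic t ht => exact h_eq t ht
  | compl t htm ht =>
    rw [setIntegral_compl (hm _ htm) hf, setIntegral_compl (hm _ htm) hg, h_univ, ht]
  | iUnion t hd htm ht =>
    rw [integral_iUnion (fun i => hm _ (htm i)) hd hf.integrableOn,
      integral_iUnion (fun i => hm _ (htm i)) hd hg.integrableOn]
    exact tsum_congr ht

end SetIntegral

section CondExp

variable {Ω E : Type*} [NormedAddCommGroup E] [NormedSpace ℝ E] [CompleteSpace E]
  {m₀ m₁ m₂ mΩ : MeasurableSpace Ω} {μ : Measure[mΩ] Ω} [IsFiniteMeasure μ] {f : Ω → E}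

lemma setIntegral_inter_eq_measureReal_smul_of_indep (hle₀ : m₀ ≤ mΩ) (hle₂ : m₂ ≤ mΩ)
    (hindep : Indep m₀ m₂ μ) (hf : StronglyMeasurable[m₀] f) (hfint : Integrable f μ)
    {s₁ s₂ : Set Ω} (hs₁ : MeasurableSet[m₀] s₁) (hs₂ : MeasurableSet[m₂] s₂) :
    ∫ x in s₁ ∩ s₂, f x ∂μ = μ.real s₂ • ∫ x in s₁, f x ∂μ := by
  have hcond : μ[s₁.indicator f | m₂] =ᵐ[μ] fun _ => ∫ x, s₁.indicator f x ∂μ :=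
    condExp_indep_eq hle₀ hle₂ (hf.indicator hs₁) hindep
  calc ∫ x in s₁ ∩ s₂, f x ∂μ = ∫ x in s₂, s₁.indicator f x ∂μ := by
        rw [setIntegral_indicator (hle₀ _ hs₁), Set.inter_comm]
    _ = ∫ x in s₂, μ[s₁.indicator f | m₂] x ∂μ :=
        (setIntegral_condExp hle₂ (hfint.indicator (hle₀ _ hs₁)) hs₂).symm
    _ = ∫ _ in s₂, ∫ x, s₁.indicator f x ∂μ ∂μ :=
        setIntegral_congr_ae (hle₂ _ hs₂) (hcond.mono fun x hx _ => hx)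
    _ = μ.real s₂ • ∫ x in s₁, f x ∂μ := by
        rw [setIntegral_const, integral_indicator (hle₀ _ hs₁)]

theorem condExp_sup_ae_eq_condExp_of_indep (hm₁₀ : m₁ ≤ m₀) (hle₀ : m₀ ≤ mΩ)
    (hle₂ : m₂ ≤ mΩ) (hindep : Indep m₀ m₂ μ) (hf : StronglyMeasurable[m₀] f)
    (hfint : Integrable f μ) : μ[f | m₁ ⊔ m₂] =ᵐ[μ] μ[f | m₁] := by
  have hle₁ : m₁ ≤ mΩ := hm₁₀.trans hle₀
  have hg₀ : StronglyMeasurable[m₀] (μ[f | m₁]) := stronglyMeasurable_condExp.mono hm₁₀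
  refine (ae_eq_condExp_of_forall_setIntegral_eq (sup_le hle₁ hle₂) hfint
    (fun _ _ _ => integrable_condExp.integrableOn) (fun s hs _ => ?_)
    (stronglyMeasurable_condExp.mono (le_sup_left : m₁ ≤ m₁ ⊔ m₂)).aestronglyMeasurable).symm
  refine setIntegral_eq_of_isPiSystem (sup_le hle₁ hle₂)
    (MeasurableSpace.sup_eq_generateFrom_image2_inter m₁ m₂)
    ((@MeasurableSpace.isPiSystem_measurableSet Ω m₁).image2_inter
      (@MeasurableSpace.isPiSystem_measurableSet Ω m₂))
    integrable_condExp hfint (integral_condExp hle₁) ?_ hs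
  rintro _ ⟨s₁, hs₁, s₂, hs₂, rfl⟩
  rw [setIntegral_inter_eq_measureReal_smul_of_indep hle₀ hle₂ hindep hg₀ integrable_condExp
      (hm₁₀ _ hs₁) hs₂,
    setIntegral_inter_eq_measureReal_smul_of_indep hle₀ hle₂ hindep hf hfint (hm₁₀ _ hs₁) hs₂,
    setIntegral_condExp hle₁ hfint hs₁]

end CondExp

section RestrictComap

variable {Ω ι β : Type*} [MeasurableSpace β] (X : ι → Ω → β)

lemma comap_restrict_eq_iSup (T : Finset ι) :
    MeasurableSpace.comap (fun ω (j : T) => X j ω) inferInstance =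
      ⨆ j ∈ T, MeasurableSpace.comap (X j) inferInstance := by
  simp only [MeasurableSpace.pi, MeasurableSpace.comap_iSup, MeasurableSpace.comap_comp]
  rw [iSup_subtype']
  rfl

lemma comap_restrict_union [DecidableEq ι] (T T' : Finset ι) :
    MeasurableSpace.comap (fun ω (j : ↥(T ∪ T')) => X j ω) inferInstance =
      MeasurableSpace.comap (fun ω (j : T) => X j ω) inferInstance ⊔
        MeasurableSpace.comap (fun ω (j : T') => X j ω) inferInstance := by
  simp only [comap_restrict_eq_iSup, Finset.iSup_union]

lemma comap_restrict_mono {T T' : Finset ι} (h : T ⊆ T') :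
    MeasurableSpace.comap (fun ω (j : T) => X j ω) inferInstance ≤
      MeasurableSpace.comap (fun ω (j : T') => X j ω) inferInstance := by
  simp only [comap_restrict_eq_iSup]
  exact biSup_mono fun j hj => h hj

lemma comap_restrict_of_eq_empty {T : Finset ι} (hT : T = ∅) :
    MeasurableSpace.comap (fun ω (j : T) => X j ω) inferInstance = ⊥ := by
  simp [comap_restrict_eq_iSup, hT]

lemma comap_restrict_le [MeasurableSpace Ω] (hX : ∀ j, Measurable (X j)) (T : Finset ι) :
    MeasurableSpace.comap (fun ω (j : T) => X j ω) inferInstance ≤ ‹MeasurableSpace Ω› :=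
  (measurable_pi_lambda (fun ω (j : T) => X j ω) fun j => hX j).comap_le

lemma indep_comap_restrict_of_iIndepFun [MeasurableSpace Ω] {μ : Measure Ω} {κ : Type*}
    (hX : ∀ j, Measurable (X j)) (G : κ → Finset ι)
    (hindep : iIndepFun (fun k ω (j : G k) => X j ω) μ) (i : κ) {T : Finset ι}
    (hT : ∀ j ∈ T, ∃ k ≠ i, j ∈ G k) :
    Indep (MeasurableSpace.comap (fun ω (j : G i) => X j ω) inferInstance)
      (MeasurableSpace.comap (fun ω (j : T) => X j ω) inferInstance) μ := by
  have h := indep_iSup_of_disjoint (fun k => comap_restrict_le X hX (G k))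
    ((iIndepFun_iff_iIndep _ _ μ).1 hindep) (disjoint_compl_right (a := ({i} : Set κ)))
  refine indep_of_indep_of_le_right (indep_of_indep_of_le_left h (le_iSup₂_of_le i rfl le_rfl)) ?_
  rw [comap_restrict_eq_iSup]
  refine iSup₂_le fun j hj => ?_
  obtain ⟨k, hki, hjk⟩ := hT j hj
  refine le_iSup₂_of_le k hki ?_
  rw [comap_restrict_eq_iSup]
  exact le_iSup₂_of_le j hjk le_rfl

end RestrictComap

theorem condexp_partially_additively_separable_general
    {Ω : Type*} [MeasurableSpace Ω] (μ : Measure Ω) [IsProbabilityMeasure μ]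
    (M Gn : ℕ) (X : Fin M → Ω → ℝ) (hX : ∀ j, Measurable (X j))
    (G : Fin Gn → Finset (Fin M))
    (hcover : Finset.univ.biUnion G = (Finset.univ : Finset (Fin M)))
    (hindep : iIndepFun (m := fun i : Fin Gn => (inferInstance : MeasurableSpace (↥(G i) → ℝ)))
      (fun (i : Fin Gn) (ω : Ω) (j : ↥(G i)) => X j ω) μ)
    (f : (i : Fin Gn) → ((↥(G i)) → ℝ) → ℝ)
    (hfmeas : ∀ i, Measurable (f i))
    (hfint : ∀ i, Integrable (fun ω => f i (fun j : ↥(G i) => X j ω)) μ)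
    (S : Finset (Fin M)) :
    (μ[fun ω => ∑ i : Fin Gn, f i (fun j : ↥(G i) => X j ω) |
        MeasurableSpace.comap (fun (ω : Ω) (j : ↥S) => X j ω) inferInstance]
      =ᵐ[μ]
      fun ω => ∑ i : Fin Gn,
        (μ[fun ω' => f i (fun j : ↥(G i) => X j ω') |
          MeasurableSpace.comap (fun (ω' : Ω) (j : ↥(S ∩ G i)) => X j ω') inferInstance]) ω)
    ∧
    ∀ i : Fin Gn, S ∩ G i = ∅ →
      (μ[fun ω' => f i (fun j : ↥(G i) => X j ω') |
          MeasurableSpace.comap (fun (ω' : Ω) (j : ↥(S ∩ G i)) => X j ω') inferInstance]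
        =ᵐ[μ] fun _ => ∫ ω', f i (fun j : ↥(G i) => X j ω') ∂μ) := by
  have hgroup : ∀ i, μ[fun ω => f i (fun j : ↥(G i) => X j ω) |
        MeasurableSpace.comap (fun (ω : Ω) (j : ↥S) => X j ω) inferInstance]
      =ᵐ[μ] μ[fun ω => f i (fun j : ↥(G i) => X j ω) |
        MeasurableSpace.comap (fun (ω : Ω) (j : ↥(S ∩ G i)) => X j ω) inferInstance] := by
    intro i
    have hother : ∀ j ∈ S \ G i, ∃ k ≠ i, j ∈ G k := fun j hj => by
      obtain ⟨k, -, hjk⟩ := Finset.mem_biUnion.1 (hcover ▸ Finset.mem_univ j)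
      exact ⟨k, fun hki => (Finset.mem_sdiff.1 hj).2 (hki ▸ hjk), hjk⟩
    have hsplit := comap_restrict_union X (S ∩ G i) (S \ G i)
    rw [Finset.union_comm, Finset.sdiff_union_inter] at hsplit
    rw [hsplit]
    exact condExp_sup_ae_eq_condExp_of_indep (comap_restrict_mono X Finset.inter_subset_right)
      (comap_restrict_le X hX _) (comap_restrict_le X hX _)
      (indep_comap_restrict_of_iIndepFun X hX G hindep i hother)
      ((hfmeas i).comp (comap_measurable _)).stronglyMeasurable (hfint i)
  refine ⟨?_, fun i hi => ?_⟩
  · rw [← Finset.sum_fn]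
    refine (condExp_finsetSum (fun i _ => hfint i) _).trans ?_
    filter_upwards [ae_all_iff.2 hgroup] with ω hω
    simp only [Finset.sum_apply, hω]
  · rw [comap_restrict_of_eq_empty X hi, condExp_bot]

/-- Decomposition of the conditional expectation of a partially additively separable model
under group independence (equation (simple-vs) in the paper): for every subset `S` of the
features, almost everywhere,
`E[∑ i, f i (X_{G i}) | σ(X_S)] = ∑ i, E[f i (X_{G i}) | σ(X_{S ∩ G i})]`,
and in particular, for groups with `S ∩ G i = ∅` the `i`-th term is the unconditional
expectation `E[f i (X_{G i})]`. -/
theorem condexp_partially_additively_separable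
    {Ω : Type*} [MeasurableSpace Ω] (μ : Measure Ω) [IsProbabilityMeasure μ]
    (M Gn : ℕ) (X : Fin M → Ω → ℝ) (hX : ∀ j, Measurable (X j))
    (G : Fin Gn → Finset (Fin M))
    (hne : ∀ i, (G i).Nonempty)
    (hdisj : ∀ i j : Fin Gn, i ≠ j → Disjoint (G i) (G j))
    (hcover : Finset.univ.biUnion G = (Finset.univ : Finset (Fin M)))
    (hindep : iIndepFun (m := fun i : Fin Gn => (inferInstance : MeasurableSpace (↥(G i) → ℝ)))
      (fun (i : Fin Gn) (ω : Ω) (j : ↥(G i)) => X j ω) μ)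
    (f : (i : Fin Gn) → ((↥(G i)) → ℝ) → ℝ)
    (hfmeas : ∀ i, Measurable (f i))
    (hfint : ∀ i, Integrable (fun ω => f i (fun j : ↥(G i) => X j ω)) μ)
    (S : Finset (Fin M)) :
    (μ[fun ω => ∑ i : Fin Gn, f i (fun j : ↥(G i) => X j ω) |
        MeasurableSpace.comap (fun (ω : Ω) (j : ↥S) => X j ω) inferInstance]
      =ᵐ[μ]
      fun ω => ∑ i : Fin Gn,
        (μ[fun ω' => f i (fun j : ↥(G i) => X j ω') |
          MeasurableSpace.comap (fun (ω' : Ω) (j : ↥(S ∩ G i)) => X j ω') inferInstance]) ω)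
    ∧
    ∀ i : Fin Gn, S ∩ G i = ∅ →
      (μ[fun ω' => f i (fun j : ↥(G i) => X j ω') |
          MeasurableSpace.comap (fun (ω' : Ω) (j : ↥(S ∩ G i)) => X j ω') inferInstance]
        =ᵐ[μ] fun _ => ∫ ω', f i (fun j : ↥(G i) => X j ω') ∂μ) :=
  condexp_partially_additively_separable_general μ M Gn X hX G hcover hindep f hfmeas hfint S
end
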